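/- Let Λ̂ = diag(λ₂, …, λ_n) with all λ_i > 0 and let F be a real (n−1)×k matrix. Then sup_{ω ∈ ℝ} ‖F^T (jωI + Λ̂)^{-1} F‖₂ = ‖F^T Λ̂^{-1} F‖₂, and this value is finite. -/

import Mathlib

/-!
Write `H = Λ̂^{-1/2} F`. Then `Fᵀ (jωI + Λ̂)⁻¹ F = Hᴴ U_ω H` with
`U_ω = diag(λᵢ / (jω + λᵢ))`, a diagonal contraction which is the identity at `ω = 0`.
Hence `‖Hᴴ U_ω H‖ ≤ ‖H‖² = ‖Hᴴ H‖` by the C⋆-identity, with equality at `ω = 0`.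
Finally, a real matrix has the same spectral norm over `ℂ` as over `ℝ`, because it acts
separately on the real and imaginary parts of a vector.
-/

open Matrix
open scoped Matrix.Norms.L2Operator

variable {𝕜 : Type*} [RCLike 𝕜] {m n : Type*}

lemma EuclideanSpace.norm_sq_eq_re_add_im [Fintype n] (v : n → 𝕜) :
    ‖WithLp.toLp 2 v‖ ^ 2 =
      ‖WithLp.toLp 2 fun i => RCLike.re (v i)‖ ^ 2 +
        ‖WithLp.toLp 2 fun i => RCLike.im (v i)‖ ^ 2 := by
  simp only [EuclideanSpace.norm_sq_eq, RCLike.norm_sq_eq_def, ← Finset.sum_add_distrib]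
  simp

lemma EuclideanSpace.norm_toLp_ofReal [Fintype n] (v : n → ℝ) :
    ‖WithLp.toLp 2 fun i => (v i : 𝕜)‖ = ‖WithLp.toLp 2 v‖ := by
  simp [EuclideanSpace.norm_eq]

namespace Matrix

lemma re_map_ofReal_mulVec [Fintype n] (A : Matrix m n ℝ) (v : n → 𝕜) (i : m) :
    RCLike.re ((A.map ((↑) : ℝ → 𝕜) *ᵥ v) i) = (A *ᵥ fun j => RCLike.re (v j)) i := by
  simp [mulVec, dotProduct]

lemma im_map_ofReal_mulVec [Fintype n] (A : Matrix m n ℝ) (v : n → 𝕜) (i : m) :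
    RCLike.im ((A.map ((↑) : ℝ → 𝕜) *ᵥ v) i) = (A *ᵥ fun j => RCLike.im (v j)) i := by
  simp [mulVec, dotProduct]

lemma map_ofReal_mulVec_ofReal [Fintype n] (A : Matrix m n ℝ) (v : n → ℝ) :
    A.map ((↑) : ℝ → 𝕜) *ᵥ (fun j => (v j : 𝕜)) = fun i => ((A *ᵥ v) i : 𝕜) := by
  ext i
  simp [mulVec, dotProduct]

lemma l2_opNorm_map_ofReal [Fintype m] [Fintype n] [DecidableEq n] (A : Matrix m n ℝ) :
    ‖A.map ((↑) : ℝ → 𝕜)‖ = ‖A‖ := by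
  refine le_antisymm ?_ ?_
  · rw [l2_opNorm_def]
    refine ContinuousLinearMap.opNorm_le_bound _ (norm_nonneg _) fun z => ?_
    refine (sq_le_sq₀ (by positivity) (by positivity)).mp ?_
    simp only [LinearEquiv.trans_apply, LinearMap.coe_toContinuousLinearMap', toLpLin_apply]
    set u : EuclideanSpace ℝ n := WithLp.toLp 2 fun j => RCLike.re (z j)
    set w : EuclideanSpace ℝ n := WithLp.toLp 2 fun j => RCLike.im (z j)
    have hz : ‖z‖ ^ 2 = ‖u‖ ^ 2 + ‖w‖ ^ 2 := EuclideanSpace.norm_sq_eq_re_add_im z.ofLp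
    calc _ = ‖WithLp.toLp 2 (A *ᵥ u)‖ ^ 2 + ‖WithLp.toLp 2 (A *ᵥ w)‖ ^ 2 := by
          rw [EuclideanSpace.norm_sq_eq_re_add_im]
          simp only [re_map_ofReal_mulVec, im_map_ofReal_mulVec]
          rfl
      _ ≤ (‖A‖ * ‖u‖) ^ 2 + (‖A‖ * ‖w‖) ^ 2 := by
          gcongr <;> exact l2_opNorm_mulVec A _
      _ = (‖A‖ * ‖z‖) ^ 2 := by rw [mul_pow, mul_pow, mul_pow, hz]; ring
  · rw [l2_opNorm_def]
    refine ContinuousLinearMap.opNorm_le_bound _ (norm_nonneg _) fun x => ?_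
    simpa [toLpLin_apply, map_ofReal_mulVec_ofReal, EuclideanSpace.norm_toLp_ofReal] using
      l2_opNorm_mulVec (A.map ((↑) : ℝ → 𝕜)) (WithLp.toLp 2 fun j => (x j : 𝕜))

lemma inv_diagonal_of_ne_zero [Fintype m] [DecidableEq m] {K : Type*} [Field K] {v : m → K}
    (h : ∀ i, v i ≠ 0) : (diagonal v)⁻¹ = diagonal fun i => (v i)⁻¹ := by
  refine inv_eq_right_inv ?_
  rw [diagonal_mul_diagonal, ← diagonal_one]
  exact congrArg diagonal (funext fun i => mul_inv_cancel₀ (h i))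

lemma conjTranspose_mul_diagonal_mul_eq [Fintype m] [DecidableEq m] (F : Matrix m n 𝕜)
    {s : m → ℝ} (hs : ∀ i, s i ≠ 0) (g : m → 𝕜) :
    Fᴴ * diagonal g * F = (diagonal (fun i => (s i : 𝕜)⁻¹) * F)ᴴ *
      diagonal (fun i => (s i : 𝕜) ^ 2 * g i) * (diagonal (fun i => (s i : 𝕜)⁻¹) * F) := by
  conv_rhs => rw [conjTranspose_mul, diagonal_conjTranspose, Matrix.mul_assoc Fᴴ,
    diagonal_mul_diagonal, ← Matrix.mul_assoc, Matrix.mul_assoc Fᴴ, diagonal_mul_diagonal]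
  congr 3
  funext i
  have : (s i : 𝕜) ≠ 0 := RCLike.ofReal_ne_zero.mpr (hs i)
  simp only [Pi.star_apply, star_inv₀, RCLike.star_def, RCLike.conj_ofReal]
  field_simp

lemma l2_opNorm_conjTranspose_mul_diagonal_mul_le [Fintype m] [Fintype n] [DecidableEq m]
    [DecidableEq n] (B : Matrix m n 𝕜) {u : m → 𝕜} (hu : ‖u‖ ≤ 1) :
    ‖Bᴴ * diagonal u * B‖ ≤ ‖Bᴴ * B‖ :=
  calc ‖Bᴴ * diagonal u * B‖ ≤ ‖Bᴴ‖ * ‖diagonal u‖ * ‖B‖ :=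
        (l2_opNorm_mul _ _).trans (by gcongr; exact l2_opNorm_mul _ _)
    _ ≤ ‖B‖ * 1 * ‖B‖ := by rw [l2_opNorm_conjTranspose, l2_opNorm_diagonal]; gcongr
    _ = ‖Bᴴ * B‖ := by rw [l2_opNorm_conjTranspose_mul_self, mul_one]

lemma transpose_map_ofReal_eq_conjTranspose (F : Matrix m n ℝ) :
    (F.map ((↑) : ℝ → 𝕜))ᵀ = (F.map ((↑) : ℝ → 𝕜))ᴴ := by
  ext
  simp

lemma map_ofReal_transpose_mul_diagonal_mul [Fintype m] [DecidableEq m] (F : Matrix m n ℝ)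
    (g : m → ℝ) :
    (Fᵀ * diagonal g * F).map ((↑) : ℝ → 𝕜) =
      (F.map ((↑) : ℝ → 𝕜))ᵀ * diagonal (fun i => (g i : 𝕜)) * F.map ((↑) : ℝ → 𝕜) := by
  ext
  simp [mul_apply, diagonal_apply, apply_ite]

lemma l2_opNorm_transpose_mul_diagonal_mul_le [Fintype m] [Fintype n] [DecidableEq m]
    [DecidableEq n] (F : Matrix m n ℝ) {d : m → ℝ} (hd : ∀ i, 0 < d i) {g : m → 𝕜}
    (hg : ∀ i, ‖(d i : 𝕜) * g i‖ ≤ 1) :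
    ‖(F.map ((↑) : ℝ → 𝕜))ᵀ * diagonal g * F.map ((↑) : ℝ → 𝕜)‖ ≤
      ‖Fᵀ * diagonal (fun i => (d i)⁻¹) * F‖ := by
  set H : Matrix m n 𝕜 := diagonal (fun i => ((√(d i) : ℝ) : 𝕜)⁻¹) * F.map ((↑) : ℝ → 𝕜)
  have hfactor (g : m → 𝕜) :
      (F.map ((↑) : ℝ → 𝕜))ᵀ * diagonal g * F.map ((↑) : ℝ → 𝕜) =
        Hᴴ * diagonal (fun i => (d i : 𝕜) * g i) * H := by
    rw [transpose_map_ofReal_eq_conjTranspose,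
      conjTranspose_mul_diagonal_mul_eq _ fun i => (Real.sqrt_pos.mpr (hd i)).ne']
    simp only [← RCLike.ofReal_pow, Real.sq_sqrt (hd _).le, H]
  have hdk : ∀ i, (d i : 𝕜) ≠ 0 := fun i => RCLike.ofReal_ne_zero.mpr (hd i).ne'
  calc _ = ‖Hᴴ * diagonal (fun i => (d i : 𝕜) * g i) * H‖ := by rw [hfactor]
    _ ≤ ‖Hᴴ * H‖ := l2_opNorm_conjTranspose_mul_diagonal_mul_le H
        ((pi_norm_le_iff_of_nonneg zero_le_one).mpr hg)
    _ = ‖Fᵀ * diagonal (fun i => (d i)⁻¹) * F‖ := by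
        rw [← l2_opNorm_map_ofReal (𝕜 := 𝕜), map_ofReal_transpose_mul_diagonal_mul, hfactor]
        simp only [RCLike.ofReal_inv, mul_inv_cancel₀ (hdk _), diagonal_one, Matrix.mul_one]

end Matrix

lemma Complex.norm_ofReal_mul_inv_mul_I_add_le_one {d : ℝ} (hd : 0 < d) (ω : ℝ) :
    ‖(d : ℂ) * (ω * I + d)⁻¹‖ ≤ 1 := by
  have hre : d ≤ ‖(ω : ℂ) * I + d‖ := by
    simpa [abs_of_pos hd] using Complex.abs_re_le_norm ((ω : ℂ) * I + d)
  rw [← div_eq_mul_inv, norm_div, Complex.norm_real, Real.norm_of_nonneg hd.le]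
  exact div_le_one_of_le₀ hre (norm_nonneg _)

/-- For `Λ̂ = diag(λ₂,…,λₙ)` with all entries positive and real `F`:
`sup_ω ‖Fᵀ(jωI + Λ̂)⁻¹F‖₂ = ‖Fᵀ Λ̂⁻¹ F‖₂` (in particular the supremum is finite
and attained). -/
theorem stmt_13 {p k : ℕ} (d : Fin p → ℝ) (hd : ∀ i, 0 < d i)
    (F : Matrix (Fin p) (Fin k) ℝ) :
    IsGreatest {r : ℝ | ∃ ω : ℝ, r =
        ‖(F.map (fun x : ℝ => (x : ℂ)))ᵀ *
          (((ω : ℂ) * Complex.I) • (1 : Matrix (Fin p) (Fin p) ℂ) +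
            diagonal (fun i => (d i : ℂ)))⁻¹ * F.map (fun x : ℝ => (x : ℂ))‖}
      ‖Fᵀ * (diagonal d)⁻¹ * F‖ := by
  have hres (ω : ℝ) : (((ω : ℂ) * Complex.I) • (1 : Matrix (Fin p) (Fin p) ℂ) +
      diagonal (fun i => (d i : ℂ)))⁻¹ = diagonal fun i => ((ω : ℂ) * Complex.I + d i)⁻¹ := by
    rw [smul_one_eq_diagonal, diagonal_add, inv_diagonal_of_ne_zero]
    intro i h
    simpa [(hd i).ne'] using congrArg Complex.re h
  rw [inv_diagonal_of_ne_zero fun i => (hd i).ne']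
  refine ⟨⟨0, ?_⟩, ?_⟩
  · rw [hres, ← l2_opNorm_map_ofReal (𝕜 := ℂ), map_ofReal_transpose_mul_diagonal_mul]
    simp
  · rintro _ ⟨ω, rfl⟩
    rw [hres]
    exact l2_opNorm_transpose_mul_diagonal_mul_le F hd fun i =>
      Complex.norm_ofReal_mul_inv_mul_I_add_le_one (hd i) ω
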